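/- arXiv:1410.0225 — 4 statements merged into one kernel-verified Lean document; each statement's English description precedes it below -/
import Mathlib

section
/- Let H be a Hilbert space, E a Banach space, and for t ∈ (0,1] let L_t : L²([0,t];H) → E be defined by restriction of a compact operator L₁ : L²([0,1];H) → E via L_t ψ = L₁(ψ·𝟙_{[0,t)}), where ψ is extended by zero to [0,1]. Then the operator norms ‖L_t‖ tend to 0 as t → 0. -/
/-!
If the claim failed, there would be `tₙ → 0` and unit vectors `ψₙ` supported in `[0, tₙ)` with
`‖L₁ ψₙ‖ > ε`. Such a sequence is weakly null: `|⟪g, ψₙ⟫|` is at most the `L²`-norm of `g` on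
`[0, tₙ)`, which tends to `0` by absolute continuity of the integral. A compact operator maps a
bounded weakly null sequence to a norm null one, a contradiction.
-/

open MeasureTheory Filter Topology

section CompactOperator

variable {𝕜 X E : Type*} [RCLike 𝕜] [NormedAddCommGroup X] [NormedSpace 𝕜 X]
  [NormedAddCommGroup E] [NormedSpace 𝕜 E]

/-- Every subsequence of `T ∘ x` has a convergent subsequence by compactness, and its limit is
killed by every functional `f`, since `f ∘ T` is a functional on `X`; hence the limit is `0`. -/
theorem IsCompactOperator.tendsto_zero_of_weakly_null {T : X →L[𝕜] E} (hT : IsCompactOperator T)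
    {x : ℕ → X} (hx : Bornology.IsBounded (Set.range x))
    (hweak : ∀ f : StrongDual 𝕜 X, Tendsto (fun n ↦ f (x n)) atTop (𝓝 0)) :
    Tendsto (fun n ↦ T (x n)) atTop (𝓝 0) := by
  obtain ⟨K, hK, hxK⟩ := hT.image_subset_compact_of_bounded (f := (T : X →ₗ[𝕜] E)) hx
  refine tendsto_of_subseq_tendsto fun ns hns ↦ ?_
  obtain ⟨z, -, φ, hφ, hz⟩ :=
    hK.tendsto_subseq (x := fun n ↦ T (x (ns n))) fun n ↦ hxK ⟨x (ns n), ⟨ns n, rfl⟩, rfl⟩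
  suffices z = 0 from ⟨φ, this ▸ hz⟩
  refine SeparatingDual.eq_zero_of_forall_dual_eq_zero (R := 𝕜) fun f ↦ ?_
  exact tendsto_nhds_unique ((f.continuous.tendsto z).comp hz)
    (((hweak (f.comp T)).comp hns).comp hφ.tendsto_atTop)

end CompactOperator

namespace MeasureTheory

variable {α 𝕜 H : Type*} [RCLike 𝕜] [MeasurableSpace α] {μ : Measure α}
  [NormedAddCommGroup H] [InnerProductSpace 𝕜 H]

theorem L2.norm_inner_le_eLpNorm_indicator_mul_norm (g : Lp H 2 μ) {ψ : Lp H 2 μ}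
    {s : Set α} (hs : MeasurableSet s) (hψ : ∀ᵐ a ∂μ, a ∉ s → ψ a = 0) :
    ‖inner 𝕜 g ψ‖ ≤ (eLpNorm (s.indicator g) 2 μ).toReal * ‖ψ‖ := by
  have hgs : MemLp (s.indicator g) 2 μ := (Lp.memLp g).indicator hs
  have hinner : inner 𝕜 g ψ = inner 𝕜 (hgs.toLp _) ψ := by
    rw [L2.inner_def, L2.inner_def]
    refine integral_congr_ae ?_
    filter_upwards [hψ, hgs.coeFn_toLp] with a ha hga
    by_cases has : a ∈ s
    · rw [hga, Set.indicator_of_mem has]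
    · rw [ha has, inner_zero_right, inner_zero_right]
  rw [hinner, ← Lp.norm_toLp _ hgs]
  exact norm_inner_le_norm _ _

theorem MemLp.tendsto_eLpNorm_indicator_of_measure_tendsto_zero {p : ENNReal} (hp_one : 1 ≤ p)
    (hp_top : p ≠ ⊤) {f : α → H} (hf : MemLp f p μ) {ι : Type*} {l : Filter ι} {s : ι → Set α}
    (hs : ∀ i, MeasurableSet (s i)) (hμs : Tendsto (fun i ↦ μ (s i)) l (𝓝 0)) :
    Tendsto (fun i ↦ eLpNorm ((s i).indicator f) p μ) l (𝓝 0) := by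
  refine ENNReal.tendsto_nhds_zero.2 fun ε hε ↦ ?_
  rcases eq_or_ne ε ⊤ with rfl | hε_top
  · exact Eventually.of_forall fun _ ↦ le_top
  obtain ⟨δ, hδ, hδε⟩ := hf.eLpNorm_indicator_le hp_one hp_top (ENNReal.toReal_pos hε.ne' hε_top)
  filter_upwards [ENNReal.tendsto_nhds_zero.1 hμs _ (ENNReal.ofReal_pos.2 hδ)] with i hi
  simpa [ENNReal.ofReal_toReal hε_top] using hδε (s i) (hs i) hi

theorem L2.tendsto_inner_zero_of_measure_support_tendsto_zero (g : Lp H 2 μ) {ι : Type*}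
    {l : Filter ι} {ψ : ι → Lp H 2 μ} {s : ι → Set α} (hs : ∀ i, MeasurableSet (s i))
    (hμs : Tendsto (fun i ↦ μ (s i)) l (𝓝 0)) (hψ : ∀ i, ‖ψ i‖ ≤ 1)
    (hψs : ∀ i, ∀ᵐ a ∂μ, a ∉ s i → ψ i a = 0) :
    Tendsto (fun i ↦ inner 𝕜 g (ψ i)) l (𝓝 0) := by
  have hb := (ENNReal.tendsto_toReal ENNReal.zero_ne_top).comp
    ((Lp.memLp g).tendsto_eLpNorm_indicator_of_measure_tendsto_zero one_le_two
      ENNReal.ofNat_ne_top hs hμs)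
  refine squeeze_zero_norm (fun i ↦ ?_) hb
  calc ‖inner 𝕜 g (ψ i)‖ ≤ (eLpNorm ((s i).indicator g) 2 μ).toReal * ‖ψ i‖ :=
        L2.norm_inner_le_eLpNorm_indicator_mul_norm g (hs i) (hψs i)
    _ ≤ (eLpNorm ((s i).indicator g) 2 μ).toReal :=
        mul_le_of_le_one_right ENNReal.toReal_nonneg (hψ i)

end MeasureTheory

theorem Real.volume_restrict_Icc_Iio_le (a b t : ℝ) :
    volume.restrict (Set.Icc a b) (Set.Iio t) ≤ ENNReal.ofReal (t - a) := by
  rw [Measure.restrict_apply measurableSet_Iio, ← Real.volume_Icc]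
  exact measure_mono fun x ⟨hxt, hax, _⟩ ↦ ⟨hax, hxt.le⟩

theorem norm_restricted_compact_operator_tendsto_zero_general
    {H E : Type*} [NormedAddCommGroup H] [InnerProductSpace ℝ H] [CompleteSpace H]
    [NormedAddCommGroup E] [NormedSpace ℝ E]
    (L₁ : Lp H 2 (volume.restrict (Set.Icc (0:ℝ) 1)) →L[ℝ] E)
    (hL₁ : IsCompactOperator L₁) :
    ∀ ε > (0:ℝ), ∃ δ > (0:ℝ), ∀ t : ℝ, 0 < t → t < δ →
      ∀ ψ : Lp H 2 (volume.restrict (Set.Icc (0:ℝ) 1)), ‖ψ‖ ≤ 1 →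
        (∀ᵐ s ∂(volume.restrict (Set.Icc (0:ℝ) 1)), t ≤ s → ψ s = 0) →
        ‖L₁ ψ‖ ≤ ε := by
  intro ε hε
  by_contra! hcon
  choose t ht0 htlt ψ hψ1 hψ0 hψε using fun n : ℕ ↦ hcon (1 / (n + 1)) Nat.one_div_pos_of_nat
  have ht : Tendsto t atTop (𝓝 0) := squeeze_zero (fun n ↦ (ht0 n).le) (fun n ↦ (htlt n).le)
    tendsto_one_div_add_atTop_nhds_zero_nat
  have hμt : Tendsto (fun n ↦ volume.restrict (Set.Icc (0:ℝ) 1) (Set.Iio (t n))) atTop (𝓝 0) := by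
    refine tendsto_of_tendsto_of_tendsto_of_le_of_le tendsto_const_nhds ?_ (fun _ ↦ zero_le)
      fun n ↦ Real.volume_restrict_Icc_Iio_le 0 1 (t n)
    simpa using ENNReal.tendsto_ofReal ht
  have hweak : ∀ f : StrongDual ℝ (Lp H 2 (volume.restrict (Set.Icc (0:ℝ) 1))),
      Tendsto (fun n ↦ f (ψ n)) atTop (𝓝 0) := fun f ↦ by
    simp_rw [← InnerProductSpace.toDual_symm_apply (𝕜 := ℝ) (y := f)]
    exact L2.tendsto_inner_zero_of_measure_support_tendsto_zero _ (fun _ ↦ measurableSet_Iio) hμt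
      hψ1 fun n ↦ (hψ0 n).mono fun s hs hst ↦ hs (not_lt.1 hst)
  have hbdd : Bornology.IsBounded (Set.range ψ) :=
    isBounded_iff_forall_norm_le.2 ⟨1, Set.forall_mem_range.2 hψ1⟩
  have hLψ : Tendsto (fun n ↦ ‖L₁ (ψ n)‖) atTop (𝓝 0) := by
    simpa using (hL₁.tendsto_zero_of_weakly_null hbdd hweak).norm
  obtain ⟨n, hn⟩ := (hLψ.eventually (gt_mem_nhds hε)).exists
  exact (hψε n).asymm hn

/-- If L₁ : L²([0,1];H) → E is compact, then the norms of the restricted operators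
L_t ψ = L₁(ψ·𝟙_{[0,t)}) (i.e. the norm of L₁ over the subspace of functions
supported in [0,t)) tend to 0 as t → 0. -/
theorem norm_restricted_compact_operator_tendsto_zero
    {H E : Type*} [NormedAddCommGroup H] [InnerProductSpace ℝ H] [CompleteSpace H]
    [NormedAddCommGroup E] [NormedSpace ℝ E] [CompleteSpace E]
    (L₁ : Lp H 2 (volume.restrict (Set.Icc (0:ℝ) 1)) →L[ℝ] E)
    (hL₁ : IsCompactOperator L₁) :
    ∀ ε > (0:ℝ), ∃ δ > (0:ℝ), ∀ t : ℝ, 0 < t → t < δ →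
      ∀ ψ : Lp H 2 (volume.restrict (Set.Icc (0:ℝ) 1)), ‖ψ‖ ≤ 1 →
        (∀ᵐ s ∂(volume.restrict (Set.Icc (0:ℝ) 1)), t ≤ s → ψ s = 0) →
        ‖L₁ ψ‖ ≤ ε :=
  norm_restricted_compact_operator_tendsto_zero_general L₁ hL₁
end

section
/- Let H be a Hilbert space with orthonormal basis (e_k), and define on H the diagonal operators Q e_k = k e_k and S(t) e_k = e^{-k²t} e_k. Then for every t > 0 the operator L_t ψ = ∫₀ᵗ S(s) Q ψ(s) ds is a bounded operator from L²([0,t];H) to H with operator norm ‖L_t‖ = 1/√2, independent of t. In particular ‖L_t‖ does not converge to 0 as t → 0. -/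
/-!
Coordinatewise, `(L_t ψ)_k = ∫₀ᵗ g_k(s) ⟪e_k, ψ(s)⟫ ds` with `g_k(s) = k e^{-k²s}`
(`diagKernel k`), and `‖g_k‖²_{L²(0,t)} = (1 - e^{-2k²t})/2 ≤ 1/2`. Cauchy–Schwarz in each
coordinate, Bessel's inequality under the integral and Parseval give `‖L_t ψ‖² ≤ ‖ψ‖²/2`.
Conversely `ψ = g_k e_k / ‖g_k‖` is a unit vector with `‖L_t ψ‖ = ‖g_k‖`, which tends to `1/√2`
as `k → ∞` for every fixed `t > 0`.
-/

open MeasureTheory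

/-- The operator L_t ψ = ∫₀ᵗ S(s) Q ψ(s) ds for the diagonal operators
Q e_k = k e_k, S(s) e_k = e^{-k²s} e_k, written out coordinatewise. -/
noncomputable def diagL {H : Type*} [NormedAddCommGroup H] [InnerProductSpace ℝ H]
    [CompleteSpace H] (e : HilbertBasis ℕ ℝ H) (t : ℝ) (ψ : ℝ → H) : H :=
  ∑' k : ℕ, (∫ s in Set.Ioc (0:ℝ) t,
      (k : ℝ) * Real.exp (-(k:ℝ)^2 * s) * (inner ℝ (e k) (ψ s) : ℝ)) • e k

open Filter Topology Set

theorem integral_mul_sq_le_mul_integral_sq {α : Type*} [MeasurableSpace α] {μ : Measure α}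
    {f g : α → ℝ} (hf : MemLp f 2 μ) (hg : MemLp g 2 μ) :
    (∫ x, f x * g x ∂μ) ^ 2 ≤ (∫ x, f x ^ 2 ∂μ) * ∫ x, g x ^ 2 ∂μ := by
  have inner_toLp : ∀ {u v : α → ℝ} (hu : MemLp u 2 μ) (hv : MemLp v 2 μ),
      inner ℝ (hu.toLp u) (hv.toLp v) = ∫ x, u x * v x ∂μ := fun hu hv => by
    rw [L2.inner_def]
    refine integral_congr_ae ?_
    filter_upwards [hu.coeFn_toLp, hv.coeFn_toLp] with x hux hvx
    rw [hux, hvx, real_inner_eq_re_inner, RCLike.inner_apply, conj_trivial, mul_comm]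
    rfl
  simpa only [inner_toLp, ← sq] using real_inner_mul_inner_self_le (hf.toLp f) (hg.toLp g)

theorem integral_Ioc_exp_mul (c t : ℝ) (hc : c ≠ 0) (ht : 0 ≤ t) :
    ∫ s in Ioc 0 t, Real.exp (c * s) = (Real.exp (c * t) - 1) / c := by
  rw [← intervalIntegral.integral_of_le ht, intervalIntegral.integral_comp_mul_left _ hc,
    integral_exp, mul_zero, Real.exp_zero, smul_eq_mul, inv_mul_eq_div]

theorem HilbertBasis.norm_tsum_smul_sq {ι H : Type*} [NormedAddCommGroup H]
    [InnerProductSpace ℝ H] (b : HilbertBasis ι ℝ H) {a : ι → ℝ} (ha : Summable fun i => a i ^ 2) :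
    ‖∑' i, a i • b i‖ ^ 2 = ∑' i, a i ^ 2 := by
  have hmem : Memℓp a 2 := by
    refine memℓp_gen ?_
    simpa [Real.rpow_two] using ha
  let f : lp (fun _ : ι => ℝ) 2 := ⟨a, hmem⟩
  rw [(b.hasSum_repr_symm f).tsum_eq, b.repr.symm.norm_map, ← real_inner_self_eq_norm_sq,
    lp.inner_eq_tsum]
  simp [f, sq]

noncomputable def diagKernel (l s : ℝ) : ℝ := l * Real.exp (-l ^ 2 * s)

theorem integral_diagKernel_sq (l : ℝ) {t : ℝ} (ht : 0 ≤ t) :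
    ∫ s in Ioc 0 t, diagKernel l s ^ 2 = (1 - Real.exp (-(2 * l ^ 2 * t))) / 2 := by
  rcases eq_or_ne l 0 with rfl | hl
  · simp [diagKernel]
  have hsq : ∀ s, diagKernel l s ^ 2 = l ^ 2 * Real.exp (-(2 * l ^ 2) * s) := fun s => by
    rw [diagKernel, mul_pow, ← Real.exp_nat_mul]
    ring_nf
  simp_rw [hsq]
  rw [integral_const_mul, integral_Ioc_exp_mul _ _ (by simpa using hl) ht]
  field_simp
  ring

theorem integral_diagKernel_sq_le_half (l t : ℝ) :
    ∫ s in Ioc 0 t, diagKernel l s ^ 2 ≤ 1 / 2 := by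
  rcases le_or_gt 0 t with ht | ht
  · rw [integral_diagKernel_sq l ht]
    linarith [Real.exp_nonneg (-(2 * l ^ 2 * t))]
  · simp [Ioc_eq_empty_of_le ht.le]

theorem tendsto_integral_diagKernel_sq {t : ℝ} (ht : 0 < t) :
    Tendsto (fun k : ℕ => ∫ s in Ioc 0 t, diagKernel k s ^ 2) atTop (𝓝 (1 / 2)) := by
  simp_rw [integral_diagKernel_sq _ ht.le]
  have hexp : Tendsto (fun k : ℕ => Real.exp (-(2 * (k : ℝ) ^ 2 * t))) atTop (𝓝 0) :=
    Real.tendsto_exp_atBot.comp <| tendsto_neg_atTop_atBot.comp <|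
      ((tendsto_pow_atTop two_ne_zero).const_mul_atTop two_pos).atTop_mul_const ht
        |>.comp tendsto_natCast_atTop_atTop
  simpa using (hexp.const_sub 1).div_const 2

theorem memLp_diagKernel (l t : ℝ) : MemLp (diagKernel l) 2 (volume.restrict (Ioc 0 t)) := by
  refine MemLp.of_bound (by unfold diagKernel; fun_prop) |l| ?_
  refine (ae_restrict_iff' measurableSet_Ioc).2 (Eventually.of_forall fun s hs => ?_)
  have : Real.exp (-l ^ 2 * s) ≤ 1 := Real.exp_le_one_iff.2 <| by nlinarith [hs.1, sq_nonneg l]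
  rw [diagKernel, norm_mul, Real.norm_of_nonneg (Real.exp_nonneg _)]
  exact mul_le_of_le_one_right (norm_nonneg l) this

section Bessel
variable {α ι H : Type*} [MeasurableSpace α] {μ : Measure α} [NormedAddCommGroup H]
  [InnerProductSpace ℝ H] {v : ι → H} {ψ : α → H}

theorem Orthonormal.sum_integral_inner_sq_le (hv : Orthonormal ℝ v) (hψ : MemLp ψ 2 μ)
    (s : Finset ι) : ∑ i ∈ s, ∫ x, inner ℝ (v i) (ψ x) ^ 2 ∂μ ≤ ∫ x, ‖ψ x‖ ^ 2 ∂μ := by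
  have hint : ∀ i, Integrable (fun x => inner ℝ (v i) (ψ x) ^ 2) μ :=
    fun i => (hψ.const_inner (v i)).integrable_sq
  rw [← integral_finsetSum _ fun i _ => hint i]
  refine integral_mono (integrable_finsetSum _ fun i _ => hint i)
    ((memLp_two_iff_integrable_sq_norm hψ.1).1 hψ) fun x => ?_
  simpa only [Real.norm_eq_abs, sq_abs] using hv.sum_inner_products_le (ψ x) (s := s)

theorem Orthonormal.summable_integral_inner_sq (hv : Orthonormal ℝ v) (hψ : MemLp ψ 2 μ) :
    Summable fun i => ∫ x, inner ℝ (v i) (ψ x) ^ 2 ∂μ :=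
  summable_of_sum_le (fun _ => integral_nonneg fun _ => sq_nonneg _)
    (hv.sum_integral_inner_sq_le hψ)

theorem Orthonormal.tsum_integral_inner_sq_le (hv : Orthonormal ℝ v) (hψ : MemLp ψ 2 μ) :
    ∑' i, ∫ x, inner ℝ (v i) (ψ x) ^ 2 ∂μ ≤ ∫ x, ‖ψ x‖ ^ 2 ∂μ :=
  Real.tsum_le_of_sum_le (fun _ => integral_nonneg fun _ => sq_nonneg _)
    (hv.sum_integral_inner_sq_le hψ)

end Bessel

section DiagL
variable {H : Type*} [NormedAddCommGroup H] [InnerProductSpace ℝ H] [CompleteSpace H]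
  (e : HilbertBasis ℕ ℝ H) {t : ℝ}

theorem sq_norm_diagL_le {ψ : ℝ → H} (hψ : MemLp ψ 2 (volume.restrict (Ioc 0 t))) :
    ‖diagL e t ψ‖ ^ 2 ≤ (∫ s in Ioc 0 t, ‖ψ s‖ ^ 2) / 2 := by
  set I : ℕ → ℝ := fun k => ∫ s in Ioc 0 t, inner ℝ (e k) (ψ s) ^ 2
  set a : ℕ → ℝ := fun k => ∫ s in Ioc 0 t, diagKernel k s * inner ℝ (e k) (ψ s)
  have ha : ∀ k, a k ^ 2 ≤ I k / 2 := fun k =>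
    calc a k ^ 2 ≤ (∫ s in Ioc 0 t, diagKernel k s ^ 2) * I k :=
          integral_mul_sq_le_mul_integral_sq (memLp_diagKernel k t) (hψ.const_inner (e k))
      _ ≤ 1 / 2 * I k := mul_le_mul_of_nonneg_right (integral_diagKernel_sq_le_half k t)
          (integral_nonneg fun _ => sq_nonneg _)
      _ = I k / 2 := by ring
  have hI := e.orthonormal.summable_integral_inner_sq hψ
  have hsum : Summable fun k => a k ^ 2 :=
    (hI.div_const 2).of_nonneg_of_le (fun _ => sq_nonneg _) ha
  calc ‖diagL e t ψ‖ ^ 2 = ∑' k, a k ^ 2 := e.norm_tsum_smul_sq hsum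
    _ ≤ ∑' k, I k / 2 := hsum.tsum_le_tsum ha (hI.div_const 2)
    _ = (∑' k, I k) / 2 := tsum_div_const
    _ ≤ (∫ s in Ioc 0 t, ‖ψ s‖ ^ 2) / 2 := by
      gcongr
      exact e.orthonormal.tsum_integral_inner_sq_le hψ

theorem norm_diagL_le {ψ : ℝ → H} (hψ : MemLp ψ 2 (volume.restrict (Ioc 0 t))) :
    ‖diagL e t ψ‖ ≤ (Real.sqrt 2)⁻¹ * Real.sqrt (∫ s in Ioc 0 t, ‖ψ s‖ ^ 2) := by
  rw [← Real.sqrt_inv, ← Real.sqrt_mul (by norm_num), inv_mul_eq_div]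
  exact Real.le_sqrt_of_sq_le (sq_norm_diagL_le e hψ)

theorem diagL_smul_basis (f : ℝ → ℝ) (k : ℕ) :
    diagL e t (fun s => f s • e k) = (∫ s in Ioc 0 t, diagKernel k s * f s) • e k := by
  rw [diagL, tsum_eq_single k fun j hj => ?_]
  · simp [diagKernel, real_inner_smul_right, e.orthonormal.1 k]
  · simp [real_inner_smul_right, e.orthonormal.2 hj]

end DiagL

def diagLUnitBallNorms {H : Type*} [NormedAddCommGroup H] [InnerProductSpace ℝ H]
    [CompleteSpace H] (e : HilbertBasis ℕ ℝ H) (t : ℝ) : Set ℝ :=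
  {r | ∃ ψ : ℝ → H, MemLp ψ 2 (volume.restrict (Ioc 0 t)) ∧
    (∫ s in Ioc 0 t, ‖ψ s‖ ^ 2) ≤ 1 ∧ r = ‖diagL e t ψ‖}

section UnitBall
variable {H : Type*} [NormedAddCommGroup H] [InnerProductSpace ℝ H] [CompleteSpace H]
  (e : HilbertBasis ℕ ℝ H) {t : ℝ}

theorem sqrt_integral_diagKernel_sq_mem_diagLUnitBallNorms (k : ℕ) :
    Real.sqrt (∫ s in Ioc 0 t, diagKernel k s ^ 2) ∈ diagLUnitBallNorms e t := by
  set N := ∫ s in Ioc 0 t, diagKernel k s ^ 2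
  have hN : 0 ≤ N := integral_nonneg fun _ => sq_nonneg _
  -- for `N = 0` the junk value `x / 0 = 0` makes `ψ = 0`, and the computation below still holds
  refine ⟨fun s => (diagKernel k s / Real.sqrt N) • e k,
    (memLp_top_const (e k)).smul (p := 2) ?_, ?_, ?_⟩
  · simpa only [div_eq_mul_inv] using (memLp_diagKernel k t).mul_const _
  · simp_rw [norm_smul, e.orthonormal.1 k, mul_one, Real.norm_eq_abs, sq_abs, div_pow,
      Real.sq_sqrt hN]
    rw [integral_div]
    exact div_self_le_one N
  · rw [diagL_smul_basis, norm_smul, e.orthonormal.1 k, mul_one]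
    simp_rw [mul_div_assoc', ← sq]
    rw [integral_div, Real.div_sqrt, Real.norm_of_nonneg (Real.sqrt_nonneg N)]

theorem isLUB_diagLUnitBallNorms (ht : 0 < t) :
    IsLUB (diagLUnitBallNorms e t) (Real.sqrt 2)⁻¹ := by
  refine ⟨?_, fun b hb => ?_⟩
  · rintro r ⟨ψ, hψ, hψ1, rfl⟩
    calc ‖diagL e t ψ‖ ≤ (Real.sqrt 2)⁻¹ * Real.sqrt (∫ s in Ioc 0 t, ‖ψ s‖ ^ 2) :=
          norm_diagL_le e hψ
      _ ≤ (Real.sqrt 2)⁻¹ * 1 := by gcongr; exact Real.sqrt_le_one.2 hψ1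
      _ = (Real.sqrt 2)⁻¹ := mul_one _
  · have hlim := (Real.continuous_sqrt.tendsto _).comp (tendsto_integral_diagKernel_sq ht)
    rw [one_div, Real.sqrt_inv] at hlim
    exact le_of_tendsto hlim <| Eventually.of_forall fun k =>
      hb (sqrt_integral_diagKernel_sq_mem_diagLUnitBallNorms e k)

theorem sSup_diagLUnitBallNorms (ht : 0 < t) :
    sSup (diagLUnitBallNorms e t) = (Real.sqrt 2)⁻¹ :=
  (isLUB_diagLUnitBallNorms e ht).csSup_eq
    ⟨_, sqrt_integral_diagKernel_sq_mem_diagLUnitBallNorms e 0⟩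

end UnitBall

/-- For every t > 0 the operator L_t is bounded from L²([0,t];H) to H with
operator norm exactly 1/√2; in particular the norms do not tend to 0 as t → 0. -/
theorem diag_operator_norm_eq_inv_sqrt_two
    {H : Type*} [NormedAddCommGroup H] [InnerProductSpace ℝ H] [CompleteSpace H]
    (e : HilbertBasis ℕ ℝ H) :
    (∀ t : ℝ, 0 < t → ∀ ψ : ℝ → H,
        MemLp ψ 2 (volume.restrict (Set.Ioc (0:ℝ) t)) →
        ‖diagL e t ψ‖ ≤ (Real.sqrt 2)⁻¹ *
          Real.sqrt (∫ s in Set.Ioc (0:ℝ) t, ‖ψ s‖^2)) ∧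
    (∀ t : ℝ, 0 < t →
      IsLUB {r : ℝ | ∃ ψ : ℝ → H,
          MemLp ψ 2 (volume.restrict (Set.Ioc (0:ℝ) t)) ∧
          (∫ s in Set.Ioc (0:ℝ) t, ‖ψ s‖^2) ≤ 1 ∧
          r = ‖diagL e t ψ‖} ((Real.sqrt 2)⁻¹)) ∧
    ¬ Filter.Tendsto (fun t : ℝ =>
        sSup {r : ℝ | ∃ ψ : ℝ → H,
          MemLp ψ 2 (volume.restrict (Set.Ioc (0:ℝ) t)) ∧
          (∫ s in Set.Ioc (0:ℝ) t, ‖ψ s‖^2) ≤ 1 ∧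
          r = ‖diagL e t ψ‖})
      (nhdsWithin 0 (Set.Ioi 0)) (nhds 0) := by
  refine ⟨fun t _ ψ hψ => norm_diagL_le e hψ, fun t ht => isLUB_diagLUnitBallNorms e ht, ?_⟩
  intro hlim
  have hconst : Tendsto (fun _ : ℝ => (Real.sqrt 2)⁻¹) (𝓝[>] 0) (𝓝 0) :=
    hlim.congr' <| eventually_nhdsWithin_of_forall fun t ht => sSup_diagLUnitBallNorms e ht
  exact (inv_pos.2 (Real.sqrt_pos.2 two_pos)).ne' (tendsto_nhds_unique tendsto_const_nhds hconst)
end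

section
/- Let u : [0,∞) → [0,∞) be differentiable and satisfy u'(t) ≤ -λ u(t)^m + φ(t)^m for all t ≥ 0, where λ > 0, m ≥ 1 is an integer, and φ : [0,∞) → [0,∞) is continuous and nondecreasing. Then u(t) ≤ u(0) + 2 λ^{-1/m} φ(t) for all t ≥ 0. -/
/-!
Set `c = λ^{-1/m} φ(t)`, so that `λ cᵐ = φ(t)ᵐ`. On `[0, t]` the monotonicity of `φ` gives
`u' ≤ λ (cᵐ - uᵐ)`, so `u' ≤ 0` wherever `u ≥ c`: the level `max (u 0) c` is a barrier that `u`
cannot cross before time `t`. Hence `u(t) ≤ max (u 0) c ≤ u(0) + 2c`.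
-/

open Set Filter Topology

theorem image_le_of_deriv_right_nonpos_above {f f' : ℝ → ℝ} {a b M : ℝ}
    (hf : ContinuousOn f (Icc a b)) (hf' : ∀ x ∈ Ico a b, HasDerivWithinAt f (f' x) (Ici x) x)
    (ha : f a ≤ M) (hM : ∀ x ∈ Ico a b, M ≤ f x → f' x ≤ 0) :
    ∀ x ∈ Icc a b, f x ≤ M := by
  intro x hx
  -- the slightly rising barriers `M + ε (y - a)` are strict, and tend to `M` as `ε → 0`
  have hfence : ∀ ε > 0, f x ≤ M + ε * (x - a) := by
    intro ε hε
    have hB : ∀ y, HasDerivAt (fun y => M + ε * (y - a)) ε y := fun y => by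
      simpa using (((hasDerivAt_id y).sub_const a).const_mul ε).const_add M
    refine image_le_of_deriv_right_lt_deriv_boundary hf hf' (by simpa using ha) hB ?_ hx
    intro y hy hfy
    have hMy : M ≤ f y := hfy ▸ le_add_of_nonneg_right (mul_nonneg hε.le (sub_nonneg.2 hy.1))
    exact (hM y hy hMy).trans_lt hε
  have hlim : Tendsto (fun ε => M + ε * (x - a)) (𝓝[>] 0) (𝓝 M) := by
    have hcont : Continuous fun ε : ℝ => M + ε * (x - a) := by fun_prop
    exact (hcont.tendsto' 0 M (by simp)).mono_left nhdsWithin_le_nhds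
  exact ge_of_tendsto hlim (eventually_nhdsWithin_of_forall hfence)

theorem mul_rpow_neg_one_div_mul_pow {lam : ℝ} (hlam : 0 < lam) {m : ℕ} (hm : m ≠ 0) (a : ℝ) :
    lam * (lam ^ (-(1:ℝ)/m) * a) ^ m = a ^ m := by
  have hm' : (m : ℝ) ≠ 0 := Nat.cast_ne_zero.2 hm
  rw [mul_pow, ← Real.rpow_natCast (lam ^ _), ← Real.rpow_mul hlam.le, div_mul_cancel₀ _ hm',
    Real.rpow_neg_one, ← mul_assoc, mul_inv_cancel₀ hlam.ne', one_mul]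

theorem le_max_of_deriv_le_neg_pow_add_pow (u φ u' : ℝ → ℝ) {lam : ℝ} {m : ℕ}
    (hlam : 0 < lam) (hm : m ≠ 0)
    (hu_deriv : ∀ t, 0 ≤ t → HasDerivAt u (u' t) t)
    (hineq : ∀ t, 0 ≤ t → u' t ≤ -lam * (u t) ^ m + (φ t) ^ m)
    (hφ_nonneg : ∀ t, 0 ≤ t → 0 ≤ φ t) (hφ_mono : MonotoneOn φ (Ici 0)) {t : ℝ} (ht : 0 ≤ t) :
    u t ≤ max (u 0) (lam ^ (-(1:ℝ)/m) * φ t) := by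
  set c := lam ^ (-(1:ℝ)/m) * φ t
  have hc : 0 ≤ c := mul_nonneg (Real.rpow_nonneg hlam.le _) (hφ_nonneg t ht)
  have hu_nonincreasing_above : ∀ s ∈ Ico 0 t, max (u 0) c ≤ u s → u' s ≤ 0 := by
    intro s ⟨hs, hst⟩ hus
    have hcu : c ^ m ≤ u s ^ m := pow_le_pow_left₀ hc ((le_max_right _ _).trans hus) m
    have hφ : φ s ^ m ≤ φ t ^ m :=
      pow_le_pow_left₀ (hφ_nonneg s hs) (hφ_mono hs ht hst.le) m
    have hbalance := mul_rpow_neg_one_div_mul_pow hlam hm (φ t)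
    nlinarith [hineq s hs]
  exact image_le_of_deriv_right_nonpos_above
    (fun s hs => (hu_deriv s hs.1).continuousAt.continuousWithinAt)
    (fun s hs => (hu_deriv s hs.1).hasDerivWithinAt) (le_max_left _ _)
    hu_nonincreasing_above t ⟨ht, le_rfl⟩

theorem ode_power_comparison_general
    (u φ : ℝ → ℝ) (u' : ℝ → ℝ) (lam : ℝ) (m : ℕ)
    (hlam : 0 < lam) (hm : 1 ≤ m)
    (hu_nonneg : ∀ t, 0 ≤ t → 0 ≤ u t)
    (hu_deriv : ∀ t, 0 ≤ t → HasDerivAt u (u' t) t)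
    (hineq : ∀ t, 0 ≤ t → u' t ≤ -lam * (u t)^m + (φ t)^m)
    (hφ_nonneg : ∀ t, 0 ≤ t → 0 ≤ φ t)
    (hφ_mono : MonotoneOn φ (Set.Ici 0)) :
    ∀ t, 0 ≤ t → u t ≤ u 0 + 2 * lam ^ (-(1:ℝ)/m) * φ t := by
  intro t ht
  have hu := le_max_of_deriv_le_neg_pow_add_pow u φ u' hlam (by omega) hu_deriv hineq
    hφ_nonneg hφ_mono ht
  have hc : 0 ≤ lam ^ (-(1:ℝ)/m) * φ t :=
    mul_nonneg (Real.rpow_nonneg hlam.le _) (hφ_nonneg t ht)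
  have hu0 := hu_nonneg 0 le_rfl
  exact hu.trans (max_le (by linarith) (by linarith))

/-- If u ≥ 0 is differentiable with u' ≤ -λ uᵐ + φᵐ, where φ ≥ 0 is continuous
and nondecreasing, then u(t) ≤ u(0) + 2 λ^{-1/m} φ(t). -/
theorem ode_power_comparison
    (u φ : ℝ → ℝ) (u' : ℝ → ℝ) (lam : ℝ) (m : ℕ)
    (hlam : 0 < lam) (hm : 1 ≤ m)
    (hu_nonneg : ∀ t, 0 ≤ t → 0 ≤ u t)
    (hu_deriv : ∀ t, 0 ≤ t → HasDerivAt u (u' t) t)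
    (hineq : ∀ t, 0 ≤ t → u' t ≤ -lam * (u t)^m + (φ t)^m)
    (hφ_nonneg : ∀ t, 0 ≤ t → 0 ≤ φ t)
    (hφ_cont : Continuous φ)
    (hφ_mono : MonotoneOn φ (Set.Ici 0)) :
    ∀ t, 0 ≤ t → u t ≤ u 0 + 2 * lam ^ (-(1:ℝ)/m) * φ t :=
  ode_power_comparison_general u φ u' lam m hlam hm hu_nonneg hu_deriv hineq hφ_nonneg hφ_mono
end

section
/- Let E be a separable Banach space and Z an E-valued centered Gaussian random variable with characteristic functional 𝔼 e^{i⟨Z, x*⟩} = e^{-½ |T x*|²_K} for a bounded linear operator T : E* → K into a Hilbert space K. If (xₙ*) is a sequence in the closed unit ball of E* converging weak-star to x*, then |T(xₙ* - x*)|_K → 0. In particular T is compact from (E*, weak-star on bounded sets) to K, hence compact. -/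
/-!
Let `xₙ* → x*` weak-star. Then `⟨Z, xₙ* - x*⟩ → 0` pointwise on `Ω`, so by dominated convergence
`𝔼 e^{i⟨Z, xₙ* - x*⟩} → 1`. By the formula for the characteristic functional this expectation is
`e^{-½ |T(xₙ* - x*)|²}`, which forces `|T(xₙ* - x*)| → 0`. Compactness of `T` follows from the
sequential Banach–Alaoglu theorem: `T` maps weak-star convergent sequences of the unit ball to
norm convergent ones, and the unit ball of `E*` is weak-star sequentially compact.
-/

open MeasureTheory Filter Topology Metric Complex

theorem tendsto_integral_cexp_I_mul_of_tendsto_zero {ι Ω : Type*} {l : Filter ι}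
    [l.IsCountablyGenerated] [MeasurableSpace Ω] {P : Measure Ω} [IsProbabilityMeasure P]
    {g : ι → Ω → ℝ} (hg : ∀ i, AEStronglyMeasurable (g i) P)
    (hg_lim : ∀ᵐ ω ∂P, Tendsto (fun i => g i ω) l (𝓝 0)) :
    Tendsto (fun i => ∫ ω, cexp (I * g i ω) ∂P) l (𝓝 1) := by
  have hcont : Continuous fun t : ℝ => cexp (I * t) := by fun_prop
  have hlim := tendsto_integral_filter_of_dominated_convergence (μ := P) (l := l)
    (F := fun i ω => cexp (I * g i ω)) (f := fun _ => 1) (fun _ => 1)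
    (.of_forall fun i => hcont.comp_aestronglyMeasurable (hg i))
    (.of_forall fun i => .of_forall fun ω => (norm_exp_I_mul_ofReal _).le)
    (integrable_const 1)
    (hg_lim.mono fun ω hω => by
      simpa only [Function.comp_def, ofReal_zero, mul_zero, exp_zero] using
        (hcont.tendsto 0).comp hω)
  simpa using hlim

theorem tendsto_zero_of_tendsto_cexp_neg_half_sq {α : Type*} {l : Filter α} {u : α → ℝ}
    (hu : Tendsto (fun a => cexp (-(1/2 : ℂ) * (u a ^ 2 : ℝ))) l (𝓝 1)) :
    Tendsto u l (𝓝 0) := by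
  have hexp : Tendsto (fun a => Real.exp (-(1/2) * u a ^ 2)) l (𝓝 1) := by
    simpa [Function.comp_def, Complex.norm_exp, ← ofReal_pow, -ofReal_pow] using
      (continuous_norm.tendsto 1).comp hu
  have hsq : Tendsto (fun a => u a ^ 2) l (𝓝 0) := by
    simpa [Function.comp_def, ← mul_assoc] using
      ((Real.continuousAt_log one_ne_zero).tendsto.comp hexp).const_mul (-2)
  rw [tendsto_zero_iff_abs_tendsto_zero]
  simpa [Function.comp_def, Real.sqrt_sq_eq_abs] using (Real.continuous_sqrt.tendsto 0).comp hsq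

theorem tendsto_norm_map_sub_of_weakStar_tendsto {ι E K Ω : Type*} {l : Filter ι}
    [l.IsCountablyGenerated] [NormedAddCommGroup E] [NormedSpace ℝ E] [Norm K]
    [MeasurableSpace Ω] {P : Measure Ω} [IsProbabilityMeasure P] {Z : Ω → E}
    (hZ : AEStronglyMeasurable Z P) {T : StrongDual ℝ E → K}
    (hchar : ∀ f : StrongDual ℝ E,
      (∫ ω, cexp (I * (f (Z ω) : ℂ)) ∂P) = cexp (-(1/2 : ℂ) * (‖T f‖^2 : ℝ)))
    {xs : ι → StrongDual ℝ E} {x : StrongDual ℝ E}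
    (hx : ∀ z : E, Tendsto (fun i => xs i z) l (𝓝 (x z))) :
    Tendsto (fun i => ‖T (xs i - x)‖) l (𝓝 0) := by
  refine tendsto_zero_of_tendsto_cexp_neg_half_sq ?_
  simpa only [hchar] using tendsto_integral_cexp_I_mul_of_tendsto_zero (P := P)
    (g := fun i ω => (xs i - x) (Z ω))
    (fun i => (xs i - x).continuous.comp_aestronglyMeasurable hZ)
    (.of_forall fun ω => by simpa using (hx (Z ω)).sub_const (x (Z ω)))

theorem isCompactOperator_of_weakStar_tendsto_on_closedBall {𝕜 E F : Type*}
    [NontriviallyNormedField 𝕜] [ProperSpace 𝕜] [SeminormedAddCommGroup E] [NormedSpace 𝕜 E]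
    [TopologicalSpace.SeparableSpace E] [PseudoMetricSpace F] [Zero F] (T : StrongDual 𝕜 E → F)
    (hT : ∀ (xs : ℕ → StrongDual 𝕜 E) (x : StrongDual 𝕜 E), (∀ n, ‖xs n‖ ≤ 1) → ‖x‖ ≤ 1 →
      (∀ z, Tendsto (fun n => xs n z) atTop (𝓝 (x z))) →
      Tendsto (fun n => T (xs n)) atTop (𝓝 (T x))) :
    IsCompactOperator T := by
  refine (isCompactOperator_iff_exists_mem_nhds_image_subset_compact T).2
    ⟨closedBall 0 1, closedBall_mem_nhds 0 one_pos, T '' closedBall 0 1, ?_, subset_rfl⟩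
  refine IsSeqCompact.isCompact fun y hy => ?_
  choose xs hxs hTxs using hy
  obtain ⟨x, hx, φ, hφ, hlim⟩ := WeakDual.isSeqCompact_closedBall 𝕜 E 0 1
    (x := fun n => StrongDual.toWeakDual (xs n)) (fun n => hxs n)
  rw [tendsto_iff_forall_eval_tendsto_topDualPairing] at hlim
  refine ⟨T (WeakDual.toStrongDual x), ⟨_, hx, rfl⟩, φ, hφ, ?_⟩
  have hball : ∀ {v : StrongDual 𝕜 E}, v ∈ closedBall 0 1 → ‖v‖ ≤ 1 := mem_closedBall_zero_iff.1
  rw [show y ∘ φ = fun n => T (xs (φ n)) from funext fun n => (hTxs (φ n)).symm]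
  exact hT (fun n => xs (φ n)) x (fun n => hball (hxs _)) (hball hx) hlim

theorem gaussian_covariance_operator_compact_general
    {E : Type*} [NormedAddCommGroup E] [NormedSpace ℝ E]
    [TopologicalSpace.SeparableSpace E]
    {K : Type*} [NormedAddCommGroup K] [InnerProductSpace ℝ K]
    {Ω : Type*} [MeasureSpace Ω] (P : Measure Ω) [IsProbabilityMeasure P]
    (Z : Ω → E) (hZ : AEStronglyMeasurable Z P)
    (T : StrongDual ℝ E →L[ℝ] K)
    (hchar : ∀ f : StrongDual ℝ E,
      (∫ ω, Complex.exp (Complex.I * (f (Z ω) : ℂ)) ∂P)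
        = Complex.exp (-(1/2 : ℂ) * (‖T f‖^2 : ℝ))) :
    (∀ (xs : ℕ → StrongDual ℝ E) (x : StrongDual ℝ E),
      (∀ n, ‖xs n‖ ≤ 1) →
      (∀ z : E, Filter.Tendsto (fun n => xs n z) Filter.atTop (nhds (x z))) →
      Filter.Tendsto (fun n => ‖T (xs n - x)‖) Filter.atTop (nhds 0)) ∧
    IsCompactOperator T := by
  have hnorm : ∀ (xs : ℕ → StrongDual ℝ E) (x : StrongDual ℝ E),
      (∀ z : E, Tendsto (fun n => xs n z) atTop (𝓝 (x z))) →
      Tendsto (fun n => ‖T (xs n - x)‖) atTop (𝓝 0) :=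
    fun _ _ hx => tendsto_norm_map_sub_of_weakStar_tendsto hZ hchar hx
  refine ⟨fun xs x _ hx => hnorm xs x hx,
    isCompactOperator_of_weakStar_tendsto_on_closedBall T fun xs x _ _ hx => ?_⟩
  rw [tendsto_iff_norm_sub_tendsto_zero]
  simpa only [map_sub] using hnorm xs x hx

/-- Let Z be an E-valued centered Gaussian random variable with characteristic
functional 𝔼 e^{i⟨Z,x*⟩} = e^{-½‖T x*‖²} for a bounded operator T : E* → K into a
Hilbert space K. If xₙ* are in the closed unit ball of E* and converge weak-star to
x*, then ‖T(xₙ* - x*)‖ → 0; in particular T is a compact operator. -/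
theorem gaussian_covariance_operator_compact
    {E : Type*} [NormedAddCommGroup E] [NormedSpace ℝ E] [CompleteSpace E]
    [TopologicalSpace.SeparableSpace E]
    {K : Type*} [NormedAddCommGroup K] [InnerProductSpace ℝ K] [CompleteSpace K]
    {Ω : Type*} [MeasureSpace Ω] (P : Measure Ω) [IsProbabilityMeasure P]
    (Z : Ω → E) (hZ : AEStronglyMeasurable Z P)
    (T : StrongDual ℝ E →L[ℝ] K)
    (hchar : ∀ f : StrongDual ℝ E,
      (∫ ω, Complex.exp (Complex.I * (f (Z ω) : ℂ)) ∂P)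
        = Complex.exp (-(1/2 : ℂ) * (‖T f‖^2 : ℝ))) :
    (∀ (xs : ℕ → StrongDual ℝ E) (x : StrongDual ℝ E),
      (∀ n, ‖xs n‖ ≤ 1) →
      (∀ z : E, Filter.Tendsto (fun n => xs n z) Filter.atTop (nhds (x z))) →
      Filter.Tendsto (fun n => ‖T (xs n - x)‖) Filter.atTop (nhds 0)) ∧
    IsCompactOperator T :=
  gaussian_covariance_operator_compact_general P Z hZ T hchar
end
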